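/- Let g be the compositional inverse of the power series t - t^8 + t^15 over ℚ. Then for every n ≥ 0, the coefficient of t^(7n+1) in g equals (1/(7n+1)) times the sum over k from 0 to ⌊n/3⌋ of (-1)^k · C(7n+k, k) · C(7n+1, n-3k). -/

import Mathlib

/-!
Write `X - X^8 + X^15 = X * u` with `u = 1 - X^7 + X^14` and `W = u⁻¹`. Lagrange inversion gives
`(m + 1) * [X^(m+1)] g = [X^m] W^(m+1)`: differentiate the truncation `∑_{k ≤ m+1} g_k (X u)^k`
of `g ∘ (X u) = X` and multiply by `W^(m+1)`; the term of `(X u)^k` becomes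
`k g_k [X^j] (W^(j+1) (X u)')` with `j = m + 1 - k`, and for `j ≥ 1` this coefficient vanishes
because `j W^(j+1) (X u)' = j W^j - X (W^j)'` and `[X^j] (X F') = j [X^j] F`.
Finally `u = (1 + X^21) / (1 + X^7)`, so `W^(N+1) = (1 + X^7)^(N+1) (1 + X^21)^(-(N+1))`, and
its `X^(7n)`-coefficient is the binomial convolution of the statement.
-/

open PowerSeries Finset

/-- Composition (substitution) of formal power series; correct when the
series being substituted has zero constant term. -/
noncomputable def psComp (f g : PowerSeries ℚ) : PowerSeries ℚ :=
  PowerSeries.mk fun n => ∑ k ∈ Finset.range (n + 1), (coeff k f) * (coeff n (g ^ k))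

namespace PowerSeries

section CommSemiring

variable {R : Type*} [CommSemiring R]

theorem coeff_X_mul_derivative (φ : R⟦X⟧) (j : ℕ) :
    coeff j (X * d⁄dX R φ) = j * coeff j φ := by
  cases j with
  | zero => simp
  | succ i => rw [coeff_succ_X_mul, coeff_derivative]; push_cast; ring

theorem coeff_sum_smul_X_mul_pow (u : R⟦X⟧) (c : ℕ → R) {L N : ℕ} (hL : L < N) :
    coeff L (∑ k ∈ range N, c k • (X * u) ^ k) =
      ∑ k ∈ range (L + 1), c k * coeff L ((X * u) ^ k) := by
  simp only [map_sum, map_smul, smul_eq_mul]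
  refine (sum_subset (range_subset_range.mpr hL) fun k _ hk => ?_).symm
  rw [mem_range, not_lt] at hk
  rw [mul_pow, coeff_X_pow_mul', if_neg (by omega), mul_zero]

theorem coeff_one_add_X_pow (m k : ℕ) : coeff k ((1 + X : R⟦X⟧) ^ m) = m.choose k := by
  have hcoe : ((1 + Polynomial.X) ^ m : Polynomial R) = (1 + X : R⟦X⟧) ^ m := by
    rw [Polynomial.coe_pow, Polynomial.coe_add, Polynomial.coe_one, Polynomial.coe_X]
  rw [← hcoe, Polynomial.coeff_coe, Polynomial.coeff_one_add_X_pow]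

end CommSemiring

section CommRing

variable {R : Type*} [CommRing R]

theorem coeff_mul_expand (p : ℕ) (hp : p ≠ 0) (φ ψ : R⟦X⟧) (n : ℕ) :
    coeff n (φ * expand p hp ψ) =
      ∑ k ∈ range (n / p + 1), coeff (n - p * k) φ * coeff k ψ := by
  rw [mul_comm, coeff_mul, Nat.sum_antidiagonal_eq_sum_range_succ
    (fun i j => coeff i (expand p hp ψ) * coeff j φ)]
  simp_rw [coeff_expand, ite_mul, zero_mul]
  rw [← sum_filter]
  have hp' : 0 < p := Nat.pos_of_ne_zero hp
  have hmul : (range (n + 1)).filter (p ∣ ·) =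
      (range (n / p + 1)).map ⟨(p * ·), mul_right_injective₀ hp⟩ := by
    ext i
    simp only [mem_filter, mem_range, mem_map, Function.Embedding.coeFn_mk, Nat.lt_succ_iff]
    constructor
    · rintro ⟨hi, k, rfl⟩
      exact ⟨k, (Nat.le_div_iff_mul_le hp').mpr (by linarith), rfl⟩
    · rintro ⟨k, hk, rfl⟩
      exact ⟨by linarith [(Nat.le_div_iff_mul_le hp').mp hk], k, rfl⟩
  rw [hmul, sum_map]
  refine sum_congr rfl fun k _ => ?_
  simp [Nat.mul_div_cancel_left _ hp', mul_comm]

theorem one_sub_X_add_X_sq_pow_mul_eq_one (N : ℕ) :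
    (1 - X + X ^ 2 : R⟦X⟧) ^ (N + 1) * ((1 + X) ^ (N + 1) *
      expand 3 three_ne_zero (rescale (-1) (mk fun m => ((N + m).choose N : R)))) = 1 := by
  have h : (1 - X + X ^ 2 : R⟦X⟧) * (1 + X) =
      expand 3 three_ne_zero (rescale (-1) (1 - X)) := by
    rw [map_sub, map_one, rescale_neg_one_X, map_sub, map_one, map_neg, expand_X]
    ring
  calc _ = expand 3 three_ne_zero (rescale (-1)
        ((mk fun m => ((N + m).choose N : R)) * (1 - X) ^ (N + 1))) := by
        simp only [map_mul, map_pow]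
        rw [← h, mul_pow]
        ring
    _ = 1 := by rw [mk_add_choose_mul_one_sub_pow_eq_one, map_one, map_one]

end CommRing

section Lagrange

variable {K : Type*} [Field K] [CharZero K]

theorem coeff_inv_pow_succ_mul_derivative_X_mul {u : K⟦X⟧} (hu : constantCoeff u ≠ 0)
    (j : ℕ) :
    coeff j (u⁻¹ ^ (j + 1) * d⁄dX K (X * u)) = if j = 0 then 1 else 0 := by
  rcases Nat.eq_zero_or_pos j with rfl | hj
  · simp [hu]
  have hW : u⁻¹ ^ (j + 1) * u = u⁻¹ ^ j := by
    rw [pow_succ, mul_assoc, PowerSeries.inv_mul_cancel u hu, mul_one]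
  have hsplit : u⁻¹ ^ (j + 1) = u⁻¹ ^ (j - 1) * u⁻¹ ^ 2 := by
    rw [← pow_add]; congr 1; omega
  have hid : j • (u⁻¹ ^ (j + 1) * d⁄dX K (X * u)) =
      j • u⁻¹ ^ j - X * d⁄dX K (u⁻¹ ^ j) := by
    rw [nsmul_eq_mul, nsmul_eq_mul, derivative_pow, derivative_inv', Derivation.leibniz,
      smul_eq_mul, smul_eq_mul, derivative_X, mul_one]
    linear_combination ((j : K⟦X⟧) * X * d⁄dX K u) * hsplit + (j : K⟦X⟧) * hW
  have key := congrArg (coeff j) hid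
  rw [map_sub, coeff_X_mul_derivative, map_nsmul, map_nsmul, nsmul_eq_mul, nsmul_eq_mul,
    sub_self] at key
  rw [if_neg hj.ne']
  exact (mul_eq_zero.mp key).resolve_left (Nat.cast_ne_zero.mpr hj.ne')

theorem coeff_X_mul_pow_mul_derivative_mul_inv_pow {u : K⟦X⟧} (hu : constantCoeff u ≠ 0)
    {k M : ℕ} (hk : k ≤ M) :
    coeff M ((X * u) ^ k * d⁄dX K (X * u) * u⁻¹ ^ (M + 1)) = if k = M then 1 else 0 := by
  have hcancel : u ^ k * u⁻¹ ^ k = 1 := by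
    rw [← mul_pow, PowerSeries.mul_inv_cancel u hu, one_pow]
  have hsplit : u⁻¹ ^ (M + 1) = u⁻¹ ^ k * u⁻¹ ^ (M - k + 1) := by
    rw [← pow_add]; congr 1; omega
  have hshift : (X * u) ^ k * d⁄dX K (X * u) * u⁻¹ ^ (M + 1) =
      X ^ k * (u⁻¹ ^ (M - k + 1) * d⁄dX K (X * u)) := by
    rw [mul_pow, hsplit]
    linear_combination X ^ k * u⁻¹ ^ (M - k + 1) * d⁄dX K (X * u) * hcancel
  rw [hshift, coeff_X_pow_mul', if_pos hk, coeff_inv_pow_succ_mul_derivative_X_mul hu]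
  congr 1
  simp only [eq_iff_iff]
  omega

theorem lagrange_inversion {u : K⟦X⟧} (hu : constantCoeff u ≠ 0) (c : ℕ → K)
    (hc : ∀ L, ∑ k ∈ range (L + 1), c k * coeff L ((X * u) ^ k) = if L = 1 then 1 else 0)
    (M : ℕ) : (M + 1 : K) * c (M + 1) = coeff M (u⁻¹ ^ (M + 1)) := by
  set S := ∑ k ∈ range (M + 2), c k • (X * u) ^ k
  have hS : trunc (M + 2) S = Polynomial.X := by
    ext L
    rw [coeff_trunc, Polynomial.coeff_X]
    split_ifs with hL h1 h1
    · rw [coeff_sum_smul_X_mul_pow u c hL, hc, if_pos h1.symm]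
    · rw [coeff_sum_smul_X_mul_pow u c hL, hc, if_neg (Ne.symm h1)]
    · omega
    · rfl
  have hdS : trunc (M + 1) (d⁄dX K S) = trunc (M + 1) 1 := by
    rw [trunc_derivative, hS, Polynomial.derivative_X, trunc_one]
  have hdS_mul : d⁄dX K S * u⁻¹ ^ (M + 1) = ∑ k ∈ range (M + 1),
      ((k + 1 : K) * c (k + 1)) • ((X * u) ^ k * d⁄dX K (X * u) * u⁻¹ ^ (M + 1)) := by
    rw [map_sum, sum_range_succ', pow_zero, Derivation.map_smul, derivative_one, smul_zero,
      add_zero, sum_mul]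
    refine sum_congr rfl fun k _ => ?_
    rw [Derivation.map_smul, derivative_pow, Nat.add_sub_cancel, smul_mul_assoc, mul_comm _ (c _),
      mul_smul, mul_assoc, mul_assoc, mul_assoc, ← nsmul_eq_mul, ← Nat.cast_smul_eq_nsmul K]
    push_cast
    rfl
  calc (M + 1 : K) * c (M + 1)
      = coeff M (d⁄dX K S * u⁻¹ ^ (M + 1)) := by
        rw [hdS_mul, map_sum, sum_congr rfl fun k hk => by
          rw [map_smul, smul_eq_mul,
            coeff_X_mul_pow_mul_derivative_mul_inv_pow hu (mem_range_succ_iff.mp hk)]]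
        simp
    _ = coeff M (1 * u⁻¹ ^ (M + 1)) := by
        rw [coeff_mul_eq_coeff_trunc_mul_trunc _ _ M.lt_succ_self, hdS,
          ← coeff_mul_eq_coeff_trunc_mul_trunc _ _ M.lt_succ_self]
    _ = coeff M (u⁻¹ ^ (M + 1)) := by rw [one_mul]

end Lagrange

theorem coeff_seven_mul_inv_one_sub_X_pow_seven_add_X_pow_fourteen_pow {K : Type*} [Field K]
    (N n : ℕ) :
    coeff (7 * n) ((1 - X ^ 7 + X ^ 14 : K⟦X⟧)⁻¹ ^ (N + 1)) =
      ∑ k ∈ range (n / 3 + 1),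
        (-1 : K) ^ k * (N + k).choose k * (N + 1).choose (n - 3 * k) := by
  have hu : (1 - X ^ 7 + X ^ 14 : K⟦X⟧) = expand 7 (by norm_num) (1 - X + X ^ 2) := by
    simp [← pow_mul]
  have hinv : (1 - X ^ 7 + X ^ 14 : K⟦X⟧)⁻¹ ^ (N + 1) = expand 7 (by norm_num)
      ((1 + X) ^ (N + 1) *
        expand 3 three_ne_zero (rescale (-1) (mk fun m => ((N + m).choose N : K)))) := by
    refine left_inv_eq_right_inv (a := (1 - X ^ 7 + X ^ 14 : K⟦X⟧) ^ (N + 1)) ?_ ?_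
    · rw [← mul_pow, PowerSeries.inv_mul_cancel _ (by simp), one_pow]
    · rw [hu, ← map_pow, ← map_mul, one_sub_X_add_X_sq_pow_mul_eq_one, map_one]
  rw [hinv, coeff_expand_mul, coeff_mul_expand]
  refine sum_congr rfl fun k _ => ?_
  rw [coeff_one_add_X_pow, coeff_rescale, coeff_mk, Nat.choose_symm_add]
  ring

end PowerSeries

theorem coeff_inverse_formula_general (g : PowerSeries ℚ)
    (h2 : psComp g (PowerSeries.X - PowerSeries.X ^ 8 + PowerSeries.X ^ 15) = PowerSeries.X) :
    ∀ n : ℕ, coeff (7 * n + 1) g =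
      (1 / (7 * n + 1 : ℚ)) *
        ∑ k ∈ Finset.range (n / 3 + 1),
          (-1 : ℚ) ^ k * (Nat.choose (7 * n + k) k) * (Nat.choose (7 * n + 1) (n - 3 * k)) := by
  intro n
  have hf : (X - X ^ 8 + X ^ 15 : ℚ⟦X⟧) = X * (1 - X ^ 7 + X ^ 14) := by ring
  have hc (L : ℕ) :
      ∑ k ∈ range (L + 1), coeff k g * coeff L ((X * (1 - X ^ 7 + X ^ 14)) ^ k) =
        if L = 1 then 1 else 0 := by
    simpa [psComp, hf, coeff_X] using congrArg (coeff L) h2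
  have hlagrange := lagrange_inversion (u := 1 - X ^ 7 + X ^ 14) (by simp) (coeff · g) hc (7 * n)
  rw [coeff_seven_mul_inv_one_sub_X_pow_seven_add_X_pow_fourteen_pow] at hlagrange
  rw [← hlagrange]
  push_cast
  field_simp

/-- If `g` is the compositional inverse of `t - t^8 + t^15` over `ℚ`, then for
every `n ≥ 0` the coefficient of `t^(7n+1)` in `g` equals
`(1/(7n+1)) ∑_{k=0}^{⌊n/3⌋} (-1)^k C(7n+k,k) C(7n+1,n-3k)`. -/
theorem coeff_inverse_formula (g : PowerSeries ℚ) (hg0 : coeff 0 g = 0)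
    (h1 : psComp (PowerSeries.X - PowerSeries.X ^ 8 + PowerSeries.X ^ 15) g = PowerSeries.X)
    (h2 : psComp g (PowerSeries.X - PowerSeries.X ^ 8 + PowerSeries.X ^ 15) = PowerSeries.X) :
    ∀ n : ℕ, coeff (7 * n + 1) g =
      (1 / (7 * n + 1 : ℚ)) *
        ∑ k ∈ Finset.range (n / 3 + 1),
          (-1 : ℚ) ^ k * (Nat.choose (7 * n + k) k) * (Nat.choose (7 * n + 1) (n - 3 * k)) :=
  coeff_inverse_formula_general g h2
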